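/- arXiv:1106.5137 — 2 statements merged into one kernel-verified Lean document; each statement's English description precedes it below -/
import Mathlib

section
/- Harnack inequality for positive solutions of the nonlocal equation: assume Ω, J, g satisfy (H1)–(H3) and b ∈ C(Ω̄) ∩ L^∞(Ω) with b > 0. Then for every compact set ω compactly contained in Ω there exists a constant C = C(J, ω, b, g) > 0 such that every positive continuous bounded function u on Ω satisfying L_Ω[u](x) − b(x)u(x) = 0 for all x ∈ Ω obeys u(x) ≤ C u(y) for all x, y ∈ ω. -/
/-!
Write `M_ξ(u) = ∫ Ω ∩ ball ξ s, u` for a fixed small `s`. Since `J ≥ c > 0` near the origin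
and `g ≤ β`, the equation gives `b w * u w ≥ c / β ^ n * ∫ Ω ∩ ball w (α r), u`: the value of
`u` at `w` dominates the mass of every ball near `w`, and averaging this over a ball shows that
masses at close centres are comparable, with constants independent of `u`. Comparability is
transitive, so by connectedness of `Ω` it holds between any two centres. In the other direction,
as `J ≤ Jm` vanishes outside a ball of radius `R` and `g ≥ α`,
`b x * u x ≤ Jm / α ^ n * ∫ Ω ∩ closedBall x (β R), u`. Compactness makes both estimates
uniform: for `x, y ∈ ω`, `b x * u x` is controlled by the mass of `u` on `Ω` near `ω`, hence by
one fixed mass `M_{y₀}(u)`, hence by `u y`; finally `b` is bounded below on `ω`.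
-/

open MeasureTheory Metric Set Filter

noncomputable def Lop (n : ℕ) (Ω : Set (EuclideanSpace ℝ (Fin n)))
    (J g u : EuclideanSpace ℝ (Fin n) → ℝ) (x : EuclideanSpace ℝ (Fin n)) : ℝ :=
  ∫ y in Ω, J ((g y)⁻¹ • (x - y)) * u y / (g y) ^ n

noncomputable def lambdaP (n : ℕ) (Ω : Set (EuclideanSpace ℝ (Fin n)))
    (J g a : EuclideanSpace ℝ (Fin n) → ℝ) : ℝ :=
  sSup {l : ℝ | ∃ φ : EuclideanSpace ℝ (Fin n) → ℝ, ContinuousOn φ Ω ∧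
    (∀ x ∈ Ω, 0 < φ x) ∧ ∀ x ∈ Ω, Lop n Ω J g φ x + (a x + l) * φ x ≤ 0}

noncomputable def muG (n : ℕ) (g : EuclideanSpace ℝ (Fin n) → ℝ) :
    Measure (EuclideanSpace ℝ (Fin n)) :=
  volume.withDensity (fun x => ENNReal.ofReal (((g x) ^ n)⁻¹))

noncomputable def shrink (n : ℕ) (Ω : Set (EuclideanSpace ℝ (Fin n))) (θ : ℝ) :
    Set (EuclideanSpace ℝ (Fin n)) :=
  {x ∈ Ω | θ < infDist x (frontier Ω)}

theorem setIntegral_union_le_add {X : Type*} [MeasurableSpace X] {μ : Measure X}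
    {f : X → ℝ} {s t : Set X} (hf : 0 ≤ᵐ[μ.restrict (s ∪ t)] f)
    (hs : IntegrableOn f s μ) (ht : IntegrableOn f t μ) :
    ∫ x in s ∪ t, f x ∂μ ≤ ∫ x in s, f x ∂μ + ∫ x in t, f x ∂μ := by
  have hf' : 0 ≤ᵐ[μ.restrict s + μ.restrict t] f :=
    ae_add_measure_iff.2 ⟨ae_mono (Measure.restrict_mono subset_union_left le_rfl) hf,
      ae_mono (Measure.restrict_mono subset_union_right le_rfl) hf⟩
  rw [← integral_add_measure hs ht]
  exact integral_mono_measure (Measure.restrict_union_le s t) hf'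
    (Integrable.add_measure hs ht)

theorem setIntegral_inter_mono_set {X : Type*} [MeasurableSpace X] {μ : Measure X}
    {Ω A B : Set X} {u : X → ℝ} (hΩ : MeasurableSet Ω) (hu : ∀ y ∈ Ω, 0 ≤ u y)
    (hB : IntegrableOn u (Ω ∩ B) μ) (hAB : A ⊆ B) :
    ∫ y in Ω ∩ A, u y ∂μ ≤ ∫ y in Ω ∩ B, u y ∂μ :=
  setIntegral_mono_set hB
    (ae_mono (Measure.restrict_mono inter_subset_left le_rfl) (ae_restrict_of_forall_mem hΩ hu))
    (inter_subset_inter_right Ω hAB).eventuallyLE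

theorem norm_inv_smul_sub {E : Type*} [NormedAddCommGroup E] [NormedSpace ℝ E]
    {t : ℝ} (ht : 0 < t) (w z : E) : ‖t⁻¹ • (w - z)‖ = dist w z / t := by
  rw [norm_smul, norm_inv, Real.norm_of_nonneg ht.le, dist_eq_norm, inv_mul_eq_div]

theorem ContinuousAt.exists_forall_norm_lt_half_le {E : Type*} [SeminormedAddCommGroup E]
    {f : E → ℝ} (hf : ContinuousAt f 0) (h0 : 0 < f 0) :
    ∃ r > 0, ∀ v, ‖v‖ < r → f 0 / 2 ≤ f v := by
  obtain ⟨r, hr, h⟩ :=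
    Metric.eventually_nhds_iff.1 (continuousAt_const.eventually_lt hf (half_lt_self h0))
  exact ⟨r, hr, fun v hv => (h (by rwa [dist_zero_right])).le⟩

theorem HasCompactSupport.exists_forall_lt_norm_eq_zero {E M : Type*}
    [SeminormedAddCommGroup E] [Zero M] {f : E → M} (hf : HasCompactSupport f) :
    ∃ R, ∀ v, R < ‖v‖ → f v = 0 := by
  obtain ⟨R, hR⟩ := (isBounded_iff_subset_closedBall 0).1 hf.isBounded
  exact ⟨R, fun v hv => image_eq_zero_of_notMem_tsupport
    fun hmem => (mem_closedBall_zero_iff.1 (hR hmem)).not_gt hv⟩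

section Kernel

variable {E : Type*} [NormedAddCommGroup E] [NormedSpace ℝ E] {J : E → ℝ}

theorem le_apply_inv_smul_sub {r c α t : ℝ} (hJ : ∀ v, ‖v‖ < r → c ≤ J v) (hα : 0 < α)
    (ht : α ≤ t) {w z : E} (h : dist z w < α * r) : c ≤ J (t⁻¹ • (w - z)) := by
  apply hJ
  rw [norm_inv_smul_sub (hα.trans_le ht), div_lt_iff₀ (hα.trans_le ht), dist_comm]
  have hr : 0 < r := pos_of_mul_pos_right (dist_nonneg.trans_lt h) hα.le
  nlinarith [mul_le_mul_of_nonneg_left ht hr.le]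

theorem apply_inv_smul_sub_eq_zero {R β t : ℝ} (hJ : ∀ v, R < ‖v‖ → J v = 0) (ht : 0 < t)
    (htβ : t ≤ β) {w z : E} (h : β * R < dist z w) : J (t⁻¹ • (w - z)) = 0 := by
  apply hJ
  rw [norm_inv_smul_sub ht, lt_div_iff₀ ht, dist_comm]
  rcases le_or_gt 0 R with hR | hR
  · nlinarith [mul_le_mul_of_nonneg_right htβ hR]
  · nlinarith [mul_neg_of_neg_of_pos hR ht, dist_nonneg (x := z) (y := w)]

end Kernel

section Solutions

variable {n : ℕ} {Ω : Set (EuclideanSpace ℝ (Fin n))} {J g b u : EuclideanSpace ℝ (Fin n) → ℝ}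
  {α β c r : ℝ} {x w : EuclideanSpace ℝ (Fin n)}

noncomputable def lopIntegrand (n : ℕ) (J g u : EuclideanSpace ℝ (Fin n) → ℝ)
    (x y : EuclideanSpace ℝ (Fin n)) : ℝ :=
  J ((g y)⁻¹ • (x - y)) * u y / g y ^ n

theorem Lop_eq_setIntegral (x : EuclideanSpace ℝ (Fin n)) :
    Lop n Ω J g u x = ∫ y in Ω, lopIntegrand n J g u x y :=
  rfl

theorem lopIntegrand_nonneg (hJ : ∀ v, 0 ≤ J v) {y : EuclideanSpace ℝ (Fin n)} (hg : 0 < g y)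
    (hu : 0 ≤ u y) : 0 ≤ lopIntegrand n J g u x y :=
  div_nonneg (mul_nonneg (hJ _) hu) (pow_pos hg n).le

theorem div_pow_mul_le_lopIntegrand {y : EuclideanSpace ℝ (Fin n)}
    (hJ : c ≤ J ((g y)⁻¹ • (x - y))) (hc : 0 ≤ c) (hg : 0 < g y) (hgβ : g y ≤ β)
    (hu : 0 ≤ u y) : c / β ^ n * u y ≤ lopIntegrand n J g u x y := by
  rw [lopIntegrand, div_mul_eq_mul_div]
  exact div_le_div₀ (mul_nonneg (hc.trans hJ) hu) (mul_le_mul_of_nonneg_right hJ hu)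
    (pow_pos hg n) (pow_le_pow_left₀ hg.le hgβ n)

theorem lopIntegrand_le_div_pow_mul {Jm : ℝ} {y : EuclideanSpace ℝ (Fin n)}
    (hJ : J ((g y)⁻¹ • (x - y)) ≤ Jm) (hJm : 0 ≤ Jm) (hα : 0 < α) (hgα : α ≤ g y)
    (hu : 0 ≤ u y) : lopIntegrand n J g u x y ≤ Jm / α ^ n * u y := by
  rw [lopIntegrand, div_mul_eq_mul_div]
  exact div_le_div₀ (mul_nonneg hJm hu) (mul_le_mul_of_nonneg_right hJ hu)
    (pow_pos hα n) (pow_le_pow_left₀ hα.le hgα n)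

theorem Lop_le_mul_setIntegral {Jm R : ℝ} (hΩ : MeasurableSet Ω) (hα : 0 < α)
    (hg : ∀ y ∈ Ω, α ≤ g y ∧ g y ≤ β) (hJm : ∀ v, J v ≤ Jm) (hJm0 : 0 ≤ Jm)
    (hJR : ∀ v, R < ‖v‖ → J v = 0) (hu : ∀ y ∈ Ω, 0 ≤ u y)
    (hint : IntegrableOn (lopIntegrand n J g u x) Ω)
    (huint : IntegrableOn u (Ω ∩ closedBall x (β * R))) :
    Lop n Ω J g u x ≤ Jm / α ^ n * ∫ y in Ω ∩ closedBall x (β * R), u y := by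
  have hvanish : ∀ y ∈ Ω \ (Ω ∩ closedBall x (β * R)), lopIntegrand n J g u x y = 0 := by
    rintro y ⟨hy, hyx⟩
    have hxy : β * R < dist y x := not_le.1 fun h => hyx ⟨hy, mem_closedBall.2 h⟩
    rw [lopIntegrand, apply_inv_smul_sub_eq_zero hJR (hα.trans_le (hg y hy).1) (hg y hy).2 hxy,
      zero_mul, zero_div]
  rw [Lop_eq_setIntegral, setIntegral_eq_of_subset_of_forall_sdiff_eq_zero hΩ inter_subset_left
    hvanish, ← integral_const_mul]
  exact setIntegral_mono_on (hint.mono_set inter_subset_left) (huint.const_mul _)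
    (hΩ.inter measurableSet_closedBall) fun y hy =>
      lopIntegrand_le_div_pow_mul (hJm _) hJm0 hα (hg y hy.1).1 (hu y hy.1)

structure IsPosSolution (n : ℕ) (Ω : Set (EuclideanSpace ℝ (Fin n)))
    (J g b u : EuclideanSpace ℝ (Fin n) → ℝ) : Prop where
  continuousOn : ContinuousOn u Ω
  pos : ∀ x ∈ Ω, 0 < u x
  lop_eq : ∀ x ∈ Ω, Lop n Ω J g u x = b x * u x

namespace IsPosSolution

theorem integrableOn_lopIntegrand (hu : IsPosSolution n Ω J g b u) (hx : x ∈ Ω) (hb : 0 < b x) :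
    IntegrableOn (lopIntegrand n J g u x) Ω := by
  by_contra h
  have h0 := hu.lop_eq x hx
  rw [Lop_eq_setIntegral, integral_undef h] at h0
  exact (mul_pos hb (hu.pos x hx)).ne h0

theorem integrableOn_inter_ball (hu : IsPosSolution n Ω J g b u) (hΩ : MeasurableSet Ω)
    (hα : 0 < α) (hg : ∀ y ∈ Ω, α ≤ g y ∧ g y ≤ β) (hc : 0 < c)
    (hJ : ∀ v, ‖v‖ < r → c ≤ J v) (hw : w ∈ Ω) (hb : 0 < b w) :
    IntegrableOn u (Ω ∩ ball w (α * r)) := by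
  have hS : MeasurableSet (Ω ∩ ball w (α * r)) := hΩ.inter measurableSet_ball
  refine Integrable.mono'
    (((hu.integrableOn_lopIntegrand hw hb).mono_set inter_subset_left).const_mul (β ^ n / c))
    ((hu.continuousOn.mono inter_subset_left).aestronglyMeasurable hS)
    (ae_restrict_of_forall_mem hS ?_)
  rintro y ⟨hy, hyw⟩
  have hgy0 : 0 < g y := hα.trans_le (hg y hy).1
  have hβ : 0 < β ^ n := pow_pos (hgy0.trans_le (hg y hy).2) n
  have hle := div_pow_mul_le_lopIntegrand (x := w)
    (le_apply_inv_smul_sub hJ hα (hg y hy).1 (mem_ball.1 hyw)) hc.le hgy0 (hg y hy).2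
    (hu.pos y hy).le
  rw [Real.norm_of_nonneg (hu.pos y hy).le]
  calc u y = β ^ n / c * (c / β ^ n * u y) := by field_simp
    _ ≤ β ^ n / c * lopIntegrand n J g u w y := by gcongr

theorem div_pow_mul_setIntegral_le (hu : IsPosSolution n Ω J g b u) (hΩ : MeasurableSet Ω)
    (hα : 0 < α) (hg : ∀ y ∈ Ω, α ≤ g y ∧ g y ≤ β) (hc : 0 < c)
    (hJ : ∀ v, ‖v‖ < r → c ≤ J v) (hJnn : ∀ v, 0 ≤ J v) (hw : w ∈ Ω) (hb : 0 < b w) :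
    c / β ^ n * ∫ y in Ω ∩ ball w (α * r), u y ≤ b w * u w := by
  have hint := hu.integrableOn_lopIntegrand hw hb
  rw [← hu.lop_eq w hw, Lop_eq_setIntegral, ← integral_const_mul]
  calc ∫ y in Ω ∩ ball w (α * r), c / β ^ n * u y
      ≤ ∫ y in Ω ∩ ball w (α * r), lopIntegrand n J g u w y :=
        setIntegral_mono_on ((hu.integrableOn_inter_ball hΩ hα hg hc hJ hw hb).const_mul _)
          (hint.mono_set inter_subset_left) (hΩ.inter measurableSet_ball)
          fun y ⟨hy, hyw⟩ => div_pow_mul_le_lopIntegrand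
            (le_apply_inv_smul_sub hJ hα (hg y hy).1 (mem_ball.1 hyw)) hc.le
            (hα.trans_le (hg y hy).1) (hg y hy).2 (hu.pos y hy).le
    _ ≤ ∫ y in Ω, lopIntegrand n J g u w y :=
        setIntegral_mono_set hint (ae_restrict_of_forall_mem hΩ fun y hy =>
          lopIntegrand_nonneg hJnn (hα.trans_le (hg y hy).1) (hu.pos y hy).le)
          inter_subset_left.eventuallyLE

theorem setIntegral_inter_le_mul (hu : IsPosSolution n Ω J g b u) (hΩ : MeasurableSet Ω)
    (hα : 0 < α) (hg : ∀ y ∈ Ω, α ≤ g y ∧ g y ≤ β) (hc : 0 < c)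
    (hJ : ∀ v, ‖v‖ < r → c ≤ J v) (hJnn : ∀ v, 0 ≤ J v) {Cb : ℝ} (hw : w ∈ Ω) (hb : 0 < b w)
    (hbC : b w ≤ Cb) {S : Set (EuclideanSpace ℝ (Fin n))} (hS : S ⊆ ball w (α * r)) :
    ∫ y in Ω ∩ S, u y ≤ β ^ n * Cb / c * u w := by
  have hβ : 0 < β ^ n := pow_pos ((hα.trans_le (hg w hw).1).trans_le (hg w hw).2) n
  have hA := hu.div_pow_mul_setIntegral_le hΩ hα hg hc hJ hJnn hw hb
  have hmono := setIntegral_inter_mono_set hΩ (fun y hy => (hu.pos y hy).le)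
    (hu.integrableOn_inter_ball hΩ hα hg hc hJ hw hb) hS
  have hbu : b w * u w ≤ Cb * u w := mul_le_mul_of_nonneg_right hbC (hu.pos w hw).le
  calc ∫ y in Ω ∩ S, u y ≤ ∫ y in Ω ∩ ball w (α * r), u y := hmono
    _ = β ^ n / c * (c / β ^ n * ∫ y in Ω ∩ ball w (α * r), u y) := by field_simp
    _ ≤ β ^ n / c * (Cb * u w) := mul_le_mul_of_nonneg_left (hA.trans hbu) (by positivity)
    _ = β ^ n * Cb / c * u w := by ring

theorem setIntegral_inter_ball_le_of_dist_lt (hu : IsPosSolution n Ω J g b u) (hΩ : IsOpen Ω)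
    (hα : 0 < α) (hg : ∀ y ∈ Ω, α ≤ g y ∧ g y ≤ β) (hc : 0 < c)
    (hJ : ∀ v, ‖v‖ < r → c ≤ J v) (hJnn : ∀ v, 0 ≤ J v) {Cb : ℝ}
    (hbpos : ∀ x ∈ Ω, 0 < b x) (hbC : ∀ x ∈ Ω, b x ≤ Cb) {s : ℝ} (hs : 3 * s ≤ α * r)
    {ξ ζ : EuclideanSpace ℝ (Fin n)} (hζ : ζ ∈ Ω) (hξζ : dist ξ ζ < s) :
    ∫ y in Ω ∩ ball ξ s, u y ≤
      β ^ n * Cb / c / volume.real (Ω ∩ ball ζ s) * ∫ y in Ω ∩ ball ζ s, u y := by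
  have hs0 : 0 < s := dist_nonneg.trans_lt hξζ
  have hV : 0 < volume.real (Ω ∩ ball ζ s) :=
    ENNReal.toReal_pos
      ((hΩ.inter isOpen_ball).measure_pos volume ⟨ζ, hζ, mem_ball_self hs0⟩).ne'
      ((measure_mono inter_subset_right).trans_lt measure_ball_lt_top).ne
  have hint : IntegrableOn u (Ω ∩ ball ζ s) :=
    (hu.integrableOn_inter_ball hΩ.measurableSet hα hg hc hJ hζ (hbpos ζ hζ)).mono_set
      (inter_subset_inter_right _ (ball_subset_ball (by linarith)))
  have hpt : ∀ v ∈ Ω ∩ ball ζ s, ∫ y in Ω ∩ ball ξ s, u y ≤ β ^ n * Cb / c * u v := by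
    rintro v ⟨hv, hvζ⟩
    refine hu.setIntegral_inter_le_mul hΩ.measurableSet hα hg hc hJ hJnn hv (hbpos v hv)
      (hbC v hv) (ball_subset_ball' ?_)
    linarith [dist_triangle ξ ζ v, dist_comm ζ v, mem_ball.1 hvζ]
  have hmean := setIntegral_mono_on (integrableOn_const
    ((measure_mono inter_subset_right).trans_lt measure_ball_lt_top).ne) (hint.const_mul _)
    (hΩ.measurableSet.inter measurableSet_ball) hpt
  rw [setIntegral_const, smul_eq_mul, integral_const_mul] at hmean
  rw [div_mul_eq_mul_div, le_div_iff₀ hV]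
  linarith

end IsPosSolution

theorem exists_setIntegral_inter_ball_le_mul_setIntegral (hΩ : IsOpen Ω)
    (hΩc : IsPreconnected Ω) (hα : 0 < α) (hg : ∀ y ∈ Ω, α ≤ g y ∧ g y ≤ β) (hc : 0 < c)
    (hJ : ∀ v, ‖v‖ < r → c ≤ J v) (hJnn : ∀ v, 0 ≤ J v) {Cb : ℝ}
    (hbpos : ∀ x ∈ Ω, 0 < b x) (hbC : ∀ x ∈ Ω, b x ≤ Cb) {s : ℝ} (hs0 : 0 < s)
    (hs : 3 * s ≤ α * r) {ξ ζ : EuclideanSpace ℝ (Fin n)} (hξ : ξ ∈ Ω) (hζ : ζ ∈ Ω) :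
    ∃ T ≥ 0, ∀ u, IsPosSolution n Ω J g b u →
      ∫ y in Ω ∩ ball ξ s, u y ≤ T * ∫ y in Ω ∩ ball ζ s, u y := by
  have hβ : 0 < β := (hα.trans_le (hg ξ hξ).1).trans_le (hg ξ hξ).2
  have hCb : 0 < Cb := (hbpos ξ hξ).trans_le (hbC ξ hξ)
  have hnear : ∀ x y, y ∈ Ω → dist x y < s → ∃ T ≥ 0, ∀ u, IsPosSolution n Ω J g b u →
      ∫ z in Ω ∩ ball x s, u z ≤ T * ∫ z in Ω ∩ ball y s, u z := fun x y hy hxy =>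
    ⟨_, by positivity, fun u hu =>
      hu.setIntegral_inter_ball_le_of_dist_lt hΩ hα hg hc hJ hJnn hbpos hbC hs hy hxy⟩
  refine hΩc.induction₂' (fun x y => ∃ T ≥ 0, ∀ u, IsPosSolution n Ω J g b u →
      ∫ z in Ω ∩ ball x s, u z ≤ T * ∫ z in Ω ∩ ball y s, u z)
    (fun x _ => ?_) (fun x y z _ _ _ => ?_) hξ hζ
  · filter_upwards [mem_nhdsWithin_of_mem_nhds (ball_mem_nhds x hs0), self_mem_nhdsWithin]
      with y hxy hy
    exact ⟨hnear x y hy (by rwa [dist_comm]), hnear y x ‹_› hxy⟩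
  · rintro ⟨T₁, hT₁, h₁⟩ ⟨T₂, hT₂, h₂⟩
    refine ⟨T₁ * T₂, by positivity, fun u hu => ?_⟩
    calc ∫ w in Ω ∩ ball x s, u w ≤ T₁ * ∫ w in Ω ∩ ball y s, u w := h₁ u hu
      _ ≤ T₁ * (T₂ * ∫ w in Ω ∩ ball z s, u w) := by gcongr; exact h₂ u hu
      _ = T₁ * T₂ * ∫ w in Ω ∩ ball z s, u w := by ring

theorem exists_integrableOn_inter_and_setIntegral_le_of_isCompact (hΩ : IsOpen Ω)
    (hΩc : IsPreconnected Ω) (hα : 0 < α) (hg : ∀ y ∈ Ω, α ≤ g y ∧ g y ≤ β) (hc : 0 < c)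
    (hJ : ∀ v, ‖v‖ < r → c ≤ J v) (hJnn : ∀ v, 0 ≤ J v) {Cb : ℝ}
    (hbpos : ∀ x ∈ Ω, 0 < b x) (hbC : ∀ x ∈ Ω, b x ≤ Cb) {s : ℝ} (hs0 : 0 < s)
    (hs : 3 * s ≤ α * r) {y₀ : EuclideanSpace ℝ (Fin n)} (hy₀ : y₀ ∈ Ω)
    {K : Set (EuclideanSpace ℝ (Fin n))} (hK : IsCompact K) :
    ∃ C ≥ 0, ∀ u, IsPosSolution n Ω J g b u →
      IntegrableOn u (Ω ∩ K) ∧ ∫ y in Ω ∩ K, u y ≤ C * ∫ y in Ω ∩ ball y₀ s, u y := by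
  have hnonneg : ∀ u, IsPosSolution n Ω J g b u → ∀ A, 0 ≤ᵐ[volume.restrict (Ω ∩ A)] u :=
    fun u hu A => ae_mono (Measure.restrict_mono inter_subset_left le_rfl)
      (ae_restrict_of_forall_mem hΩ.measurableSet fun y hy => (hu.pos y hy).le)
  refine hK.induction_on ⟨0, le_rfl, fun u _ => by simp⟩ ?_ ?_ ?_
  · rintro A B hAB ⟨C, hC, h⟩
    refine ⟨C, hC, fun u hu => ?_⟩
    obtain ⟨hint, hle⟩ := h u hu
    exact ⟨hint.mono_set (inter_subset_inter_right Ω hAB),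
      (setIntegral_inter_mono_set hΩ.measurableSet (fun y hy => (hu.pos y hy).le) hint hAB).trans
        hle⟩
  · rintro A B ⟨C₁, hC₁, h₁⟩ ⟨C₂, hC₂, h₂⟩
    refine ⟨C₁ + C₂, by positivity, fun u hu => ?_⟩
    obtain ⟨hint₁, hle₁⟩ := h₁ u hu
    obtain ⟨hint₂, hle₂⟩ := h₂ u hu
    rw [inter_union_distrib_left]
    refine ⟨hint₁.union hint₂, ?_⟩
    have hunion := setIntegral_union_le_add
      (by rw [← inter_union_distrib_left]; exact hnonneg u hu _) hint₁ hint₂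
    linarith
  · intro x _
    refine ⟨ball x (s / 2), mem_nhdsWithin_of_mem_nhds (ball_mem_nhds x (by positivity)), ?_⟩
    rcases (Ω ∩ ball x (s / 2)).eq_empty_or_nonempty with hempty | ⟨ξ, hξ, hξx⟩
    · exact ⟨0, le_rfl, fun u _ => by simp [hempty]⟩
    obtain ⟨T, hT, hle⟩ :=
      exists_setIntegral_inter_ball_le_mul_setIntegral hΩ hΩc hα hg hc hJ hJnn hbpos hbC hs0 hs
        hξ hy₀
    have hsub : ball x (s / 2) ⊆ ball ξ s :=
      ball_subset_ball' (by linarith [mem_ball'.1 hξx])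
    refine ⟨T, hT, fun u hu => ?_⟩
    have hint : IntegrableOn u (Ω ∩ ball ξ s) :=
      (hu.integrableOn_inter_ball hΩ.measurableSet hα hg hc hJ hξ (hbpos ξ hξ)).mono_set
        (inter_subset_inter_right _ (ball_subset_ball (by linarith)))
    exact ⟨hint.mono_set (inter_subset_inter_right Ω hsub),
      (setIntegral_inter_mono_set hΩ.measurableSet (fun y hy => (hu.pos y hy).le) hint
        hsub).trans (hle u hu)⟩

theorem exists_setIntegral_inter_ball_le_mul_apply_of_isCompact (hΩ : IsOpen Ω)
    (hΩc : IsPreconnected Ω) (hα : 0 < α) (hg : ∀ y ∈ Ω, α ≤ g y ∧ g y ≤ β) (hc : 0 < c)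
    (hJ : ∀ v, ‖v‖ < r → c ≤ J v) (hJnn : ∀ v, 0 ≤ J v) {Cb : ℝ}
    (hbpos : ∀ x ∈ Ω, 0 < b x) (hbC : ∀ x ∈ Ω, b x ≤ Cb) {s : ℝ} (hs0 : 0 < s)
    (hs : 3 * s ≤ α * r) {y₀ : EuclideanSpace ℝ (Fin n)} (hy₀ : y₀ ∈ Ω)
    {ω : Set (EuclideanSpace ℝ (Fin n))} (hω : IsCompact ω) (hωΩ : ω ⊆ Ω) :
    ∃ C ≥ 0, ∀ u, IsPosSolution n Ω J g b u →
      ∀ y ∈ ω, ∫ z in Ω ∩ ball y₀ s, u z ≤ C * u y := by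
  suffices h : ∃ C ≥ 0, ∀ u, IsPosSolution n Ω J g b u →
      ∀ y ∈ ω ∩ Ω, ∫ z in Ω ∩ ball y₀ s, u z ≤ C * u y from
    h.imp fun C ⟨hC, hle⟩ => ⟨hC, fun u hu y hy => hle u hu y ⟨hy, hωΩ hy⟩⟩
  refine hω.induction_on ⟨0, le_rfl, fun u _ y hy => hy.1.elim⟩ ?_ ?_ ?_
  · rintro A B hAB ⟨C, hC, h⟩
    exact ⟨C, hC, fun u hu y hy => h u hu y ⟨hAB hy.1, hy.2⟩⟩
  · rintro A B ⟨C₁, hC₁, h₁⟩ ⟨C₂, hC₂, h₂⟩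
    refine ⟨max C₁ C₂, hC₁.trans (le_max_left _ _), fun u hu y ⟨hyAB, hy⟩ => ?_⟩
    have huy := (hu.pos y hy).le
    rcases hyAB with hyA | hyB
    · exact (h₁ u hu y ⟨hyA, hy⟩).trans (by gcongr; exact le_max_left _ _)
    · exact (h₂ u hu y ⟨hyB, hy⟩).trans (by gcongr; exact le_max_right _ _)
  · intro x hx
    refine ⟨ball x s, mem_nhdsWithin_of_mem_nhds (ball_mem_nhds x hs0), ?_⟩
    obtain ⟨T, hT, hle⟩ := exists_setIntegral_inter_ball_le_mul_setIntegral hΩ hΩc hα hg hc hJ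
      hJnn hbpos hbC hs0 hs hy₀ (hωΩ hx)
    have hβ : 0 < β := (hα.trans_le (hg x (hωΩ hx)).1).trans_le (hg x (hωΩ hx)).2
    have hCb : 0 < Cb := (hbpos x (hωΩ hx)).trans_le (hbC x (hωΩ hx))
    refine ⟨T * (β ^ n * Cb / c), by positivity, fun u hu y ⟨hyx, hy⟩ => ?_⟩
    calc ∫ z in Ω ∩ ball y₀ s, u z ≤ T * ∫ z in Ω ∩ ball x s, u z := hle u hu
      _ ≤ T * (β ^ n * Cb / c * u y) := by
          gcongr
          exact hu.setIntegral_inter_le_mul hΩ.measurableSet hα hg hc hJ hJnn hy (hbpos y hy)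
            (hbC y hy) (ball_subset_ball' (by linarith [mem_ball'.1 hyx]))
      _ = T * (β ^ n * Cb / c) * u y := by ring

theorem harnack_inequality (hΩ : IsOpen Ω) (hΩc : IsConnected Ω) (hα : 0 < α)
    (hg : ∀ y ∈ Ω, α ≤ g y ∧ g y ≤ β) (hr : 0 < r) (hc : 0 < c)
    (hJ : ∀ v, ‖v‖ < r → c ≤ J v) (hJnn : ∀ v, 0 ≤ J v) {Jm R : ℝ} (hJm : ∀ v, J v ≤ Jm)
    (hJR : ∀ v, R < ‖v‖ → J v = 0)
    {Cb m : ℝ} (hbpos : ∀ x ∈ Ω, 0 < b x) (hbC : ∀ x ∈ Ω, b x ≤ Cb)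
    {ω : Set (EuclideanSpace ℝ (Fin n))} (hω : IsCompact ω) (hωΩ : ω ⊆ Ω) (hm : 0 < m)
    (hbm : ∀ x ∈ ω, m ≤ b x) :
    ∃ C > 0, ∀ u, IsPosSolution n Ω J g b u → ∀ x ∈ ω, ∀ y ∈ ω, u x ≤ C * u y := by
  obtain ⟨y₀, hy₀⟩ := hΩc.nonempty
  have hs0 : 0 < α * r / 3 := by positivity
  have hs : 3 * (α * r / 3) ≤ α * r := by linarith
  obtain ⟨C₁, hC₁, hupper⟩ := exists_integrableOn_inter_and_setIntegral_le_of_isCompact hΩ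
    hΩc.isPreconnected hα hg hc hJ hJnn hbpos hbC hs0 hs hy₀ (hω.cthickening (r := β * R))
  obtain ⟨C₂, hC₂, hlower⟩ := exists_setIntegral_inter_ball_le_mul_apply_of_isCompact hΩ
    hΩc.isPreconnected hα hg hc hJ hJnn hbpos hbC hs0 hs hy₀ hω hωΩ
  have hJm0 : 0 ≤ Jm := (hJnn 0).trans (hJm 0)
  refine ⟨max (Jm / α ^ n * C₁ * C₂ / m) 1, by positivity, fun u hu x hx y hy => ?_⟩
  obtain ⟨hint, hle⟩ := hupper u hu
  have hux : 0 ≤ u x := (hu.pos x (hωΩ hx)).le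
  have huy : 0 ≤ u y := (hu.pos y (hωΩ hy)).le
  have hmass : m * u x ≤ Jm / α ^ n * C₁ * C₂ * u y := calc
    m * u x ≤ b x * u x := mul_le_mul_of_nonneg_right (hbm x hx) hux
    _ = Lop n Ω J g u x := (hu.lop_eq x (hωΩ hx)).symm
    _ ≤ Jm / α ^ n * ∫ z in Ω ∩ closedBall x (β * R), u z :=
        Lop_le_mul_setIntegral hΩ.measurableSet hα hg hJm hJm0 hJR
          (fun z hz => (hu.pos z hz).le)
          (hu.integrableOn_lopIntegrand (hωΩ hx) (hbpos x (hωΩ hx)))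
          (hint.mono_set (inter_subset_inter_right Ω (closedBall_subset_cthickening hx _)))
    _ ≤ Jm / α ^ n * ∫ z in Ω ∩ cthickening (β * R) ω, u z :=
        mul_le_mul_of_nonneg_left (setIntegral_inter_mono_set hΩ.measurableSet
          (fun z hz => (hu.pos z hz).le) hint (closedBall_subset_cthickening hx _)) (by positivity)
    _ ≤ Jm / α ^ n * (C₁ * (C₂ * u y)) :=
        mul_le_mul_of_nonneg_left (hle.trans (mul_le_mul_of_nonneg_left (hlower u hu y hy) hC₁))
          (by positivity)
    _ = Jm / α ^ n * C₁ * C₂ * u y := by ring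
  calc u x ≤ Jm / α ^ n * C₁ * C₂ / m * u y := by
        rw [div_mul_eq_mul_div, le_div_iff₀ hm]; linarith
    _ ≤ max (Jm / α ^ n * C₁ * C₂ / m) 1 * u y := by gcongr; exact le_max_left _ _

end Solutions

theorem stmt_11_general (n : ℕ)
    (Ω : Set (EuclideanSpace ℝ (Fin n))) (J g b : EuclideanSpace ℝ (Fin n) → ℝ)
    (hΩo : IsOpen Ω) (hΩc : IsConnected Ω)
    (hJcont : Continuous J) (hJsupp : HasCompactSupport J)
    (hJnn : ∀ z, 0 ≤ J z) (hJ0 : 0 < J 0)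
    (α β : ℝ) (hα : 0 < α) (hg : ∀ y ∈ Ω, α ≤ g y ∧ g y ≤ β)
    (hbcont : ContinuousOn b (closure Ω)) (hbbdd : ∃ C, ∀ x ∈ Ω, |b x| ≤ C)
    (hbpos : ∀ x ∈ closure Ω, 0 < b x)
    (ω : Set (EuclideanSpace ℝ (Fin n))) (hωcpt : IsCompact ω) (hωsub : ω ⊆ Ω) :
    ∃ C > (0:ℝ), ∀ u : EuclideanSpace ℝ (Fin n) → ℝ, ContinuousOn u Ω → (∀ x ∈ Ω, 0 < u x) →
      (∃ B, ∀ x ∈ Ω, u x ≤ B) →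
      (∀ x ∈ Ω, Lop n Ω J g u x - b x * u x = 0) →
      ∀ x ∈ ω, ∀ y ∈ ω, u x ≤ C * u y := by
  obtain ⟨r, hr, hJc⟩ := hJcont.continuousAt.exists_forall_norm_lt_half_le hJ0
  obtain ⟨Jm, hJm⟩ := hJcont.bounded_above_of_compact_support hJsupp
  obtain ⟨R, hJR⟩ := hJsupp.exists_forall_lt_norm_eq_zero
  obtain ⟨Cb, hCb⟩ := hbbdd
  obtain ⟨m, hm, hbm⟩ := hωcpt.exists_forall_le' (hbcont.mono (hωsub.trans subset_closure))
    fun x hx => hbpos x (subset_closure (hωsub hx))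
  obtain ⟨C, hC, hharnack⟩ := harnack_inequality hΩo hΩc hα hg hr (half_pos hJ0) hJc hJnn
    (fun v => (le_abs_self _).trans (hJm v)) hJR (fun x hx => hbpos x (subset_closure hx))
    (fun x hx => (le_abs_self _).trans (hCb x hx)) hωcpt hωsub hm hbm
  exact ⟨C, hC, fun u hcont hpos _ heq =>
    hharnack u ⟨hcont, hpos, fun x hx => sub_eq_zero.1 (heq x hx)⟩⟩

theorem stmt_11 (n : ℕ) (hn : 1 ≤ n)
    (Ω : Set (EuclideanSpace ℝ (Fin n))) (J g b : EuclideanSpace ℝ (Fin n) → ℝ)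
    (hΩo : IsOpen Ω) (hΩc : IsConnected Ω)
    (hJcont : Continuous J) (hJsupp : HasCompactSupport J)
    (hJnn : ∀ z, 0 ≤ J z) (hJ0 : 0 < J 0)
    (α β : ℝ) (hα : 0 < α) (hg : ∀ y ∈ Ω, α ≤ g y ∧ g y ≤ β)
    (hbcont : ContinuousOn b (closure Ω)) (hbbdd : ∃ C, ∀ x ∈ Ω, |b x| ≤ C)
    (hbpos : ∀ x ∈ closure Ω, 0 < b x)
    (ω : Set (EuclideanSpace ℝ (Fin n))) (hωcpt : IsCompact ω) (hωsub : ω ⊆ Ω) :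
    ∃ C > (0:ℝ), ∀ u : EuclideanSpace ℝ (Fin n) → ℝ, ContinuousOn u Ω → (∀ x ∈ Ω, 0 < u x) →
      (∃ B, ∀ x ∈ Ω, u x ≤ B) →
      (∀ x ∈ Ω, Lop n Ω J g u x - b x * u x = 0) →
      ∀ x ∈ ω, ∀ y ∈ ω, u x ≤ C * u y :=
  stmt_11_general n Ω J g b hΩo hΩc hJcont hJsupp hJnn hJ0 α β hα hg hbcont hbbdd hbpos ω hωcpt
    hωsub
end

section
/- Existence of an eigenpair for the averaged eigenvalue problem: let ω ⊆ ℝⁿ be a bounded open set, g ∈ L^∞(ω) with 0 < α ≤ g ≤ β, dμ := dx/g(x)ⁿ, c₀ > 0 a constant, ā ∈ C(ω̄) with σ̄ := max_{ω̄} ā. Assume there exists λ₀ ∈ ℝ with −λ₀ > σ̄ such that ∫_ω c₀/(−λ₀ − ā(x)) dμ(x) ≥ 1. Then there exist λ₁ ≤ λ₀ (in particular −λ₁ > σ̄) and a bounded positive continuous function φ₁ on ω̄ satisfying c₀ ∫_ω φ₁(y) dμ(y) + ā(x)φ₁(x) + λ₁ φ₁(x) = 0 for all x ∈ ω; one may take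 φ₁(x) = c₀/(−λ₁ − ā(x)). -/
open MeasureTheory Metric Set Filter

theorem stmt_18 (n : ℕ) (hn : 1 ≤ n)
    (ω : Set (EuclideanSpace ℝ (Fin n))) (hωo : IsOpen ω) (hωb : Bornology.IsBounded ω)
    (g : EuclideanSpace ℝ (Fin n) → ℝ) (α β : ℝ) (hα : 0 < α) (hg : ∀ y ∈ ω, α ≤ g y ∧ g y ≤ β)
    (c₀ : ℝ) (hc₀ : 0 < c₀)
    (abar : EuclideanSpace ℝ (Fin n) → ℝ) (habarcont : ContinuousOn abar (closure ω))
    (σb : ℝ) (hσb : σb = sSup (abar '' closure ω))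
    (l₀ : ℝ) (hl₀ : σb < -l₀)
    (hF : 1 ≤ ∫ x in ω, c₀ / (-l₀ - abar x) ∂(muG n g)) :
    ∃ l₁ : ℝ, l₁ ≤ l₀ ∧ σb < -l₁ ∧
      ∃ φ₁ : EuclideanSpace ℝ (Fin n) → ℝ, ContinuousOn φ₁ (closure ω) ∧
        (∀ x ∈ closure ω, 0 < φ₁ x) ∧ (∃ C, ∀ x ∈ closure ω, φ₁ x ≤ C) ∧
        (∀ x ∈ ω, c₀ * (∫ y in ω, φ₁ y ∂(muG n g)) + abar x * φ₁ x + l₁ * φ₁ x = 0) ∧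
        (∀ x ∈ closure ω, φ₁ x = c₀ / (-l₁ - abar x)) := by
  -- ω nonempty, else hF is false
  rcases Set.eq_empty_or_nonempty ω with hemp | hne
  · exfalso
    rw [hemp] at hF
    simp at hF
    linarith
  have hmeasω : MeasurableSet ω := hωo.measurableSet
  set ν := (muG n g).restrict ω with hν
  -- abar bounded above by σb on closure ω
  have hclos : IsCompact (closure ω) := hωb.isCompact_closure
  have habd : ∀ x ∈ closure ω, abar x ≤ σb := by
    intro x hx
    rw [hσb]
    exact le_csSup (hclos.image_of_continuousOn habarcont).bddAbove
      (Set.mem_image_of_mem _ hx)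
  have hden₀ : ∀ x ∈ closure ω, 0 < -l₀ - abar x := by
    intro x hx; have := habd x hx; linarith
  -- ν is a finite measure
  haveI hνfin : IsFiniteMeasure ν := by
    constructor
    rw [Measure.restrict_apply_univ]
    show (muG n g) ω < ⊤
    rw [muG, withDensity_apply _ hmeasω]
    calc ∫⁻ x in ω, ENNReal.ofReal ((g x ^ n)⁻¹) ∂volume
        ≤ ∫⁻ _ in ω, ENNReal.ofReal ((α ^ n)⁻¹) ∂volume := by
          apply setLIntegral_mono measurable_const
          intro x hx
          apply ENNReal.ofReal_le_ofReal
          exact inv_anti₀ (pow_pos hα n) (pow_le_pow_left₀ hα.le (hg x hx).1 n)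
      _ = ENNReal.ofReal ((α ^ n)⁻¹) * volume ω := by rw [setLIntegral_const]
      _ < ⊤ := ENNReal.mul_lt_top ENNReal.ofReal_lt_top hωb.measure_lt_top
  -- the family of integrands
  set f : ℝ → EuclideanSpace ℝ (Fin n) → ℝ :=
    fun l x => c₀ / (-(min l l₀) - abar x) with hf
  have hdenf : ∀ l : ℝ, ∀ x ∈ closure ω, 0 < -(min l l₀) - abar x := by
    intro l x hx
    have h1 := hden₀ x hx
    have h2 : min l l₀ ≤ l₀ := min_le_right _ _
    linarith
  set G : ℝ → ℝ := fun l => ∫ x, f l x ∂ν with hG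
  have hmeasf : ∀ l : ℝ, AEStronglyMeasurable (f l) ν := by
    intro l
    apply ContinuousOn.aestronglyMeasurable _ hmeasω
    apply ContinuousOn.div continuousOn_const
    · exact (continuousOn_const.sub (habarcont.mono subset_closure))
    · intro x hx
      exact (hdenf l x (subset_closure hx)).ne'
  have hboundptwise : ∀ l : ℝ, ∀ x ∈ ω, ‖f l x‖ ≤ c₀ / (-l₀ - abar x) := by
    intro l x hx
    have hx' := subset_closure hx
    have h1 := hden₀ x hx'
    have h2 := hdenf l x hx'
    rw [Real.norm_of_nonneg (le_of_lt (div_pos hc₀ h2))]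
    apply div_le_div_of_nonneg_left hc₀.le h1
    have : min l l₀ ≤ l₀ := min_le_right _ _
    linarith
  have hbound_int : Integrable (fun x => c₀ / (-l₀ - abar x)) ν := by
    refine ⟨?_, ?_⟩
    · apply ContinuousOn.aestronglyMeasurable _ hmeasω
      apply ContinuousOn.div continuousOn_const
      · exact (continuousOn_const.sub (habarcont.mono subset_closure))
      · intro x hx
        exact (hden₀ x (subset_closure hx)).ne'
    · apply HasFiniteIntegral.of_bounded (C := c₀ / (-l₀ - σb))
      rw [hν, ae_restrict_iff' hmeasω]
      apply ae_of_all
      intro x hx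
      have hx' := subset_closure hx
      have h1 := hden₀ x hx'
      rw [Real.norm_of_nonneg (le_of_lt (div_pos hc₀ h1))]
      apply div_le_div_of_nonneg_left hc₀.le (by linarith) (by linarith [habd x hx'])
  have hGcont : Continuous G := by
    apply MeasureTheory.continuous_of_dominated hmeasf
    · intro l
      rw [hν, ae_restrict_iff' hmeasω]
      exact ae_of_all _ (hboundptwise l)
    · exact hbound_int
    · rw [hν, ae_restrict_iff' hmeasω]
      apply ae_of_all
      intro x hx
      have hx' := subset_closure hx
      apply continuous_const.div
      · exact ((continuous_id.min continuous_const).neg.sub continuous_const)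
      · intro l
        exact (hdenf l x hx').ne'
  have hGl₀ : 1 ≤ G l₀ := by
    have : G l₀ = ∫ x in ω, c₀ / (-l₀ - abar x) ∂(muG n g) := by
      simp [hG, hf, hν, min_self]
    linarith [this ▸ hF]
  -- choose L far to the left so that G L < 1
  set V : ℝ := (ν Set.univ).toReal with hV
  have hV0 : 0 ≤ V := ENNReal.toReal_nonneg
  set L : ℝ := min l₀ (-σb - c₀ * (V + 1)) with hL
  have hLl₀ : L ≤ l₀ := min_le_left _ _
  have hLd : c₀ * (V + 1) ≤ -L - σb := by
    have : L ≤ -σb - c₀ * (V + 1) := min_le_right _ _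
    linarith
  have hLdpos : 0 < -L - σb := lt_of_lt_of_le (by positivity) hLd
  have hGL : G L < 1 := by
    have hCb : ∀ x ∈ ω, ‖f L x‖ ≤ c₀ / (-L - σb) := by
      intro x hx
      have hx' := subset_closure hx
      have h2 := hdenf L x hx'
      rw [Real.norm_of_nonneg (le_of_lt (div_pos hc₀ h2))]
      apply div_le_div_of_nonneg_left hc₀.le hLdpos
      have : min L l₀ ≤ L := min_le_left _ _
      linarith [habd x hx']
    have hnorm : ‖G L‖ ≤ (c₀ / (-L - σb)) * V := by
      rw [hG]
      have := MeasureTheory.norm_integral_le_of_norm_le_const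
        (μ := ν) (f := f L) (C := c₀ / (-L - σb)) ?_
      · exact this
      · rw [hν, ae_restrict_iff' hmeasω]
        exact ae_of_all _ hCb
    have hfrac : (c₀ / (-L - σb)) * V < 1 := by
      have h1 : c₀ / (-L - σb) ≤ c₀ / (c₀ * (V + 1)) :=
        div_le_div_of_nonneg_left hc₀.le (by positivity) hLd
      have h2 : c₀ / (c₀ * (V + 1)) = 1 / (V + 1) := by
        field_simp
      have h3 : (1 / (V + 1)) * V < 1 := by
        rw [div_mul_eq_mul_div, one_mul, div_lt_one (by linarith)]
        linarith
      calc (c₀ / (-L - σb)) * V ≤ (1 / (V + 1)) * V := by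
            rw [← h2]; exact mul_le_mul_of_nonneg_right h1 hV0
        _ < 1 := h3
    calc G L ≤ ‖G L‖ := le_abs_self _
      _ ≤ (c₀ / (-L - σb)) * V := hnorm
      _ < 1 := hfrac
  -- intermediate value theorem
  obtain ⟨l₁, hl₁mem, hl₁eq⟩ : ∃ l₁ ∈ Set.Icc L l₀, G l₁ = 1 := by
    have := intermediate_value_Icc hLl₀ hGcont.continuousOn (a := L) (b := l₀)
    exact this ⟨hGL.le, hGl₀⟩
  have hl₁le : l₁ ≤ l₀ := hl₁mem.2
  have hσl₁ : σb < -l₁ := by linarith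
  have hden₁ : ∀ x ∈ closure ω, 0 < -l₁ - abar x := by
    intro x hx; linarith [habd x hx]
  refine ⟨l₁, hl₁le, hσl₁, fun x => c₀ / (-l₁ - abar x), ?_, ?_, ?_, ?_, ?_⟩
  · apply ContinuousOn.div continuousOn_const (continuousOn_const.sub habarcont)
    intro x hx
    exact (hden₁ x hx).ne'
  · intro x hx
    exact div_pos hc₀ (hden₁ x hx)
  · refine ⟨c₀ / (-l₁ - σb), fun x hx => ?_⟩
    exact div_le_div_of_nonneg_left hc₀.le (by linarith) (by linarith [habd x hx])
  · intro x hx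
    have hint : (∫ y in ω, c₀ / (-l₁ - abar y) ∂(muG n g)) = 1 := by
      rw [← hl₁eq]
      simp [hG, hf, hν, min_eq_left hl₁le]
    rw [hint]
    have hd := hden₁ x (subset_closure hx)
    have hd' : -l₁ - abar x ≠ 0 := hd.ne'
    field_simp
    ring
  · intro x _
    rfl
end
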